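/- arXiv:2107.09193 — 4 statements merged into one kernel-verified Lean document; each statement's English description precedes it below -/
import Mathlib

section
/- Let R be a commutative ring and M a finitely generated R-module. Then M is a projective module of constant rank r if and only if Fitt_{r-1}(M) = 0 and Fitt_r(M) = R. -/
/-- The `j`-th Fitting ideal of a (finitely generated) `R`-module `M`.  For a presentation
`F →^φ R^n → M → 0` it is the ideal `I_{n-j}(φ)` generated by the `(n-j) × (n-j)` minors of a
presentation matrix `φ`, i.e. by the determinants of all `(n-j) × (n-j)` matrices whose columns
are relations (elements of the kernel of `R^n → M`) with row indices chosen among the `n` rows;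
by Fitting's lemma this ideal is independent of the chosen presentation, so we may take the
supremum over all presentations.  (With the conventions `I_k(φ) = R` for `k ≤ 0`, realized here
via the determinant of the empty matrix.) -/
noncomputable def fittingIdeal (R : Type*) [CommRing R] (M : Type*) [AddCommGroup M]
    [Module R M] (j : ℕ) : Ideal R :=
  ⨆ (n : ℕ) (π : (Fin n → R) →ₗ[R] M) (_ : Function.Surjective π),
    Ideal.span {x : R | ∃ (v : Fin (n - j) → Fin n → R) (ρ : Fin (n - j) → Fin n),
      (∀ l, π (v l) = 0) ∧ x = Matrix.det (Matrix.of fun i l => v l (ρ i))}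

/-- The Fitting ideals indexed by integers, with the convention `Fitt_j(M) = 0` for `j < 0`
(so that `Fitt_{r-1}` makes sense also for `r = 0`). -/
noncomputable def fittingIdealZ (R : Type*) [CommRing R] (M : Type*) [AddCommGroup M]
    [Module R M] (j : ℤ) : Ideal R :=
  if j < 0 then ⊥ else fittingIdeal R M j.toNat

/-!
Everything can be read off one presentation `π : R^n → M` at a time, and the ideals of minors
of relations of `π` commute with localization. If `M` is free of rank `r` over a local ring, the
kernel of `π` is free of rank `n - r`, so all larger minors of relations vanish; and a
presentation whose first `r` generators span `M` has an identity `(n - r)`-minor on the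
remaining rows. Conversely, a matrix of relations with an invertible `(n - r)`-minor on rows `ρ`
can be normalised to the identity there; it then expresses the generators indexed by `ρ` through
the other `r`, and the vanishing of all `(n - r + 1)`-minors makes those `r` independent. Hence
`M` is free of rank `r` wherever one of these minors is invertible. Since they generate
`Fitt_r(M) = R`, `M` is free on a cover of `Spec R` by basic opens, so it is finitely presented,
and being locally free it is projective.
-/

open Function Matrix

theorem Matrix.det_mul_eq_zero_of_card_lt {m p K : Type*} [Fintype m] [DecidableEq m]
    [Fintype p] [CommRing K] (P : Matrix m p K) (C : Matrix p m K)
    (h : Fintype.card p < Fintype.card m) : (P * C).det = 0 := by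
  classical
  obtain ⟨e⟩ : Nonempty (p ⊕ Fin (Fintype.card m - Fintype.card p) ≃ m) :=
    ⟨Fintype.equivOfCardEq (by simp; omega)⟩
  have hPC : P * C = (fromCols P 0).submatrix id e.symm * (fromRows C 0).submatrix e.symm id := by
    rw [submatrix_mul_equiv, fromCols_mul_fromRows]; simp
  rw [hPC, det_mul]
  exact mul_eq_zero_of_right _ <|
    det_eq_zero_of_row_eq_zero (e (Sum.inr ⟨0, by omega⟩)) fun j => by simp

theorem Matrix.det_of_cons_eq_mul {K : Type*} [CommRing K] {n k : ℕ} (w : Fin n → K)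
    (v : Fin k → Fin n → K) (t : Fin n) (ρ : Fin k → Fin n) (hw : ∀ i, w (ρ i) = 0) :
    (of fun i l => (Fin.cons w v : Fin (k + 1) → Fin n → K) l
        ((Fin.cons t ρ : Fin (k + 1) → Fin n) i)).det =
      w t * (of fun i l => v l (ρ i)).det := by
  rw [det_succ_column_zero, Fin.sum_univ_succ]
  simp [hw]
  rfl

namespace LinearMap

variable {R : Type*} [CommRing R] {M : Type*} [AddCommGroup M] [Module R M] {n k : ℕ}

def relationMinors (π : (Fin n → R) →ₗ[R] M) (k : ℕ) : Set R :=
  {x | ∃ (v : Fin k → Fin n → R) (ρ : Fin k → Fin n),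
    (∀ l, π (v l) = 0) ∧ x = (of fun i l => v l (ρ i)).det}

def minorIdeal (π : (Fin n → R) →ₗ[R] M) (k : ℕ) : Ideal R :=
  Ideal.span (π.relationMinors k)

lemma det_mem_minorIdeal {π : (Fin n → R) →ₗ[R] M} {v : Fin k → Fin n → R}
    (hv : ∀ l, π (v l) = 0) (ρ : Fin k → Fin n) :
    (of fun i l => v l (ρ i)).det ∈ π.minorIdeal k :=
  Ideal.subset_span ⟨v, ρ, hv, rfl⟩

lemma minorIdeal_zero (π : (Fin n → R) →ₗ[R] M) : π.minorIdeal 0 = ⊤ :=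
  (Ideal.eq_top_iff_one _).2 <| by
    simpa using det_mem_minorIdeal (π := π) (k := 0) (v := isEmptyElim) isEmptyElim isEmptyElim

lemma minorIdeal_eq_bot_of_lt (π : (Fin n → R) →ₗ[R] M) (h : n < k) : π.minorIdeal k = ⊥ := by
  refine Ideal.span_eq_bot.2 ?_
  rintro _ ⟨v, ρ, -, rfl⟩
  obtain ⟨i, i', hne, hρ⟩ := Fintype.exists_ne_map_eq_of_card_lt ρ (by simpa using h)
  exact det_zero_of_row_eq hne (by ext l; simp [hρ])

lemma minorIdeal_sub_add_one_eq_bot {r : ℕ} {π : (Fin n → R) →ₗ[R] M}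
    (h : π.minorIdeal (n + 1 - r) = ⊥) : π.minorIdeal (n - r + 1) = ⊥ := by
  rcases le_or_gt r n with hrn | hrn
  · rwa [show n - r + 1 = n + 1 - r by omega]
  · rw [show n + 1 - r = 0 by omega, minorIdeal_zero] at h
    exact eq_bot_iff.2 (h ▸ le_top)

section Presentation

variable {π : (Fin n → R) →ₗ[R] M}

lemma exists_relations_minor_eq_one {v : Fin k → Fin n → R} (hv : ∀ l, π (v l) = 0)
    {ρ : Fin k → Fin n} (hD : IsUnit (of fun i l => v l (ρ i)).det) :
    ∃ v' : Fin k → Fin n → R, (∀ l, π (v' l) = 0) ∧ (of fun i l => v' l (ρ i)) = 1 := by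
  set D : Matrix (Fin k) (Fin k) R := of fun i l => v l (ρ i)
  refine ⟨fun l => ∑ j, D⁻¹ j l • v j, fun l => by simp [hv], ?_⟩
  rw [← mul_nonsing_inv D hD]
  ext i l
  simp [D, mul_apply, Finset.sum_apply, mul_comm]

variable {v : Fin k → Fin n → R} {ρ : Fin k → Fin n}

/-- A relation vanishing on the rows `ρ`, put next to `v`, gives `(k + 1)`-minors equal to its
entries. -/
lemma eq_zero_of_minorIdeal_eq_bot (hv : ∀ l, π (v l) = 0) (hv₁ : (of fun i l => v l (ρ i)) = 1)
    (hF : π.minorIdeal (k + 1) = ⊥) {w : Fin n → R} (hw : π w = 0) (hwρ : ∀ i, w (ρ i) = 0) :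
    w = 0 := by
  funext t
  have h := det_mem_minorIdeal (π := π) (v := Fin.cons w v) (Fin.cases hw hv) (Fin.cons t ρ)
  rwa [hF, Ideal.mem_bot, det_of_cons_eq_mul w v t ρ hwρ, hv₁, det_one, mul_one] at h

lemma map_mem_span_of_eq_zero_on_range (ρ : Fin k → Fin n) {u : Fin n → R}
    (hu : ∀ i, u (ρ i) = 0) :
    π u ∈ Submodule.span R (Set.range fun t : {t // t ∉ Set.range ρ} => π (Pi.single t.1 1)) := by
  classical
  rw [show u = ∑ t, u t • Pi.single t 1 by ext; simp [Pi.single_apply], map_sum]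
  refine Submodule.sum_mem _ fun t _ => ?_
  by_cases ht : t ∈ Set.range ρ
  · obtain ⟨i, rfl⟩ := ht
    simp [hu]
  · rw [map_smul]
    exact Submodule.smul_mem _ _ (Submodule.subset_span ⟨⟨t, ht⟩, rfl⟩)

lemma nonempty_basis_of_minor_eq_one (hπ : Surjective π) (hv : ∀ l, π (v l) = 0)
    (hv₁ : (of fun i l => v l (ρ i)) = 1) (hF : π.minorIdeal (k + 1) = ⊥) :
    Nonempty (Module.Basis {t // t ∉ Set.range ρ} R M) := by
  classical
  have hli : LinearIndependent R fun t : {t // t ∉ Set.range ρ} => π (Pi.single t.1 1) := by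
    rw [Fintype.linearIndependent_iff]
    intro g hg t₀
    set w : Fin n → R := ∑ t, g t • Pi.single t.1 1
    have hw : w = 0 := by
      refine eq_zero_of_minorIdeal_eq_bot hv hv₁ hF (by simpa [w] using hg) fun i => ?_
      simpa [w, Pi.single_apply] using Finset.sum_eq_zero fun t _ => if_neg fun h => t.2 ⟨i, h⟩
    simpa [w, Pi.single_apply, Subtype.coe_inj] using congr_fun hw t₀
  refine ⟨Module.Basis.mk hli fun y _ => ?_⟩
  obtain ⟨u, rfl⟩ := hπ y
  have hred : π (u - ∑ i, u (ρ i) • v i) = π u := by simp [hv]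
  rw [← hred]
  refine map_mem_span_of_eq_zero_on_range ρ fun i' => ?_
  have h : ∀ i, v i (ρ i') = if i' = i then 1 else 0 := fun i => by
    simpa [Matrix.one_apply] using congrFun (congrFun hv₁ i') i
  simp [Finset.sum_apply, h]

/-- Each `y j` is a combination of the `x i`, and the resulting relation has entry `1` in row
`j` and `0` in the other rows of `y`. -/
lemma one_mem_minorIdeal_linearCombination_append {r t : ℕ} {x : Fin r → M}
    (hx : Submodule.span R (Set.range x) = ⊤) (y : Fin t → M) :
    (1 : R) ∈ (Fintype.linearCombination R (Fin.append x y)).minorIdeal t := by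
  classical
  choose c hc using fun j => (Submodule.mem_span_range_iff_exists_fun R).1
    (by simp [hx] : y j ∈ Submodule.span R (Set.range x))
  set w : Fin t → Fin (r + t) → R := fun j => Fin.append (-c j) (Pi.single j 1)
  have hw : ∀ j, Fintype.linearCombination R (Fin.append x y) (w j) = 0 := fun j => by
    simp [w, Fintype.linearCombination_apply, Fin.sum_univ_add, Pi.single_apply, hc]
  have hminor : (of fun i l => w l (Fin.natAdd r i)) = 1 := by
    ext i l
    simp [w, Matrix.one_apply, Pi.single_apply]
  simpa [hminor] using det_mem_minorIdeal hw (Fin.natAdd r)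

/-- Over a local ring the kernel of `π` is free of rank `n - finrank M`, and every matrix of
relations factors through a basis of it. -/
lemma minorIdeal_eq_bot_of_free [IsLocalRing R] [Module.Free R M] [Module.Finite R M]
    (hπ : Surjective π) (hk : n < Module.finrank R M + k) : π.minorIdeal k = ⊥ := by
  obtain ⟨σ, hσ⟩ := Module.projective_lifting_property π LinearMap.id hπ
  obtain ⟨e, he⟩ := (LinearMap.exact_subtype_ker_map π).splitSurjectiveEquiv
    (Submodule.injective_subtype _) ⟨σ, hσ⟩
  have : Module.Projective R (ker π) := .of_split (ker π).subtype (fst _ _ _ ∘ₗ e.toLinearMap) <| by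
    ext x; simp [he.1]
  have : Module.Finite R (ker π) := .of_surjective (fst _ _ _ ∘ₗ e.toLinearMap)
    fun x => ⟨e.symm (x, 0), by simp⟩
  have : Module.Free R (ker π) := Module.free_of_flat_of_isLocalRing
  have hK : Module.finrank R (ker π) < k := by
    have := e.finrank_eq
    rw [Module.finrank_prod, Module.finrank_fin_fun] at this
    omega
  refine Ideal.span_eq_bot.2 ?_
  rintro _ ⟨v, ρ, hv, rfl⟩
  set b := Module.finBasis R (ker π)
  have hfac : (of fun i l => v l (ρ i)) =
      (of fun i u => (b u : Fin n → R) (ρ i)) * of fun u l => b.repr ⟨v l, hv l⟩ u := by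
    ext i l
    have h := congrArg (fun z : ker π => (z : Fin n → R) (ρ i)) (b.sum_repr ⟨v l, hv l⟩)
    simp only [Submodule.coe_sum, Submodule.coe_smul, Finset.sum_apply, Pi.smul_apply,
      smul_eq_mul] at h
    simp [mul_apply, ← h, mul_comm]
  rw [hfac]
  exact det_mul_eq_zero_of_card_lt _ _ (by simpa using hK)

end Presentation

section Localization

variable (S : Submonoid R)

noncomputable def localizedPi (π : (Fin n → R) →ₗ[R] M) :
    (Fin n → Localization S) →ₗ[Localization S] LocalizedModule S M :=
  Fintype.linearCombination (Localization S) fun i => LocalizedModule.mk (π (Pi.single i 1)) 1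

lemma localizedPi_linearCombination (f : Fin n → M) :
    (Fintype.linearCombination R f).localizedPi S =
      Fintype.linearCombination (Localization S) fun i => LocalizedModule.mk (f i) 1 := by
  classical
  simp [localizedPi, Fintype.linearCombination_apply_single]

lemma localizedPi_algebraMap (π : (Fin n → R) →ₗ[R] M) (v : Fin n → R) :
    π.localizedPi S (fun i => algebraMap R (Localization S) (v i)) =
      LocalizedModule.mk (π v) 1 := by
  classical
  conv_rhs => rw [show v = ∑ i, v i • Pi.single i 1 by ext; simp [Pi.single_apply]]
  simp [localizedPi, Fintype.linearCombination_apply, algebraMap_smul,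
    ← LocalizedModule.mkLinearMap_apply]

variable {S} {π : (Fin n → R) →ₗ[R] M}

lemma localizedPi_surjective (hπ : Surjective π) : Surjective (π.localizedPi S) := by
  intro y
  induction y using LocalizedModule.induction_on with
  | h m s =>
    obtain ⟨v, rfl⟩ := hπ m
    refine ⟨Localization.mk 1 s • fun i => algebraMap R (Localization S) (v i), ?_⟩
    rw [map_smul, localizedPi_algebraMap, LocalizedModule.mk_smul_mk, one_smul, mul_one]

lemma exists_relation_of_localizedPi_eq_zero {w : Fin n → Localization S}
    (hw : π.localizedPi S w = 0) : ∃ s ∈ S, ∃ v : Fin n → R, π v = 0 ∧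
      ∀ i, algebraMap R (Localization S) (v i) = algebraMap R (Localization S) s * w i := by
  obtain ⟨b, hb⟩ := IsLocalization.exist_integer_multiples_of_finite S w
  choose a ha using hb
  have hwa : (fun i => algebraMap R (Localization S) (a i)) =
      algebraMap R (Localization S) (b : R) • w := by
    ext i; simp [ha, Algebra.smul_def]
  have h0 : LocalizedModule.mk (π a) (1 : S) = 0 := by
    rw [← localizedPi_algebraMap, hwa, map_smul, hw, smul_zero]
  obtain ⟨t, ht⟩ := (IsLocalizedModule.eq_zero_iff S (LocalizedModule.mkLinearMap S M)).1 h0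
  refine ⟨t * b, mul_mem t.2 b.2, (t : R) • a, by rwa [map_smul, ← Submonoid.smul_def],
    fun i => ?_⟩
  simp [mul_assoc, congrFun hwa i]

/-- Relations of `π` map to relations of its localization, and every relation of the
localization is a unit multiple of the image of a relation of `π`. -/
lemma minorIdeal_localizedPi (k : ℕ) :
    (π.localizedPi S).minorIdeal k = (π.minorIdeal k).map (algebraMap R (Localization S)) := by
  classical
  apply le_antisymm
  · refine Ideal.span_le.2 ?_
    rintro _ ⟨w, ρ, hw, rfl⟩
    choose s hs v hv hvw using fun l => exists_relation_of_localizedPi_eq_zero (hw l)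
    have hunit : IsUnit (∏ l, algebraMap R (Localization S) (s l)) := by
      rw [← map_prod]
      exact IsLocalization.map_units (Localization S) (⟨∏ l, s l, S.prod_mem fun l _ => hs l⟩ : S)
    rw [SetLike.mem_coe, ← Ideal.unit_mul_mem_iff_mem _ hunit, ← det_mul_row]
    convert Ideal.mem_map_of_mem _ (det_mem_minorIdeal hv ρ) using 1
    rw [RingHom.map_det]
    congr 1
    ext i l
    simp [hvw]
  · refine Ideal.map_le_iff_le_comap.2 <| Ideal.span_le.2 ?_
    rintro _ ⟨v, ρ, hv, rfl⟩
    rw [SetLike.mem_coe, Ideal.mem_comap, RingHom.map_det]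
    exact det_mem_minorIdeal (v := fun l i => algebraMap R (Localization S) (v l i))
      (fun l => by rw [localizedPi_algebraMap, hv, LocalizedModule.zero_mk]) ρ

lemma nonempty_basis_localizedModule (hπ : Surjective π) {v : Fin k → Fin n → R}
    (hv : ∀ l, π (v l) = 0) {ρ : Fin k → Fin n} (hd : (of fun i l => v l (ρ i)).det ∈ S)
    (hF : π.minorIdeal (k + 1) = ⊥) :
    Nonempty (Module.Basis {t // t ∉ Set.range ρ} (Localization S) (LocalizedModule S M)) := by
  set v' : Fin k → Fin n → Localization S := fun l i => algebraMap R _ (v l i)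
  have hv' : ∀ l, π.localizedPi S (v' l) = 0 := fun l => by
    rw [localizedPi_algebraMap, hv, LocalizedModule.zero_mk]
  have hD : IsUnit (of fun i l => v' l (ρ i)).det := by
    rw [show (of fun i l => v' l (ρ i)) = (algebraMap R _).mapMatrix (of fun i l => v l (ρ i))
      from rfl, ← RingHom.map_det]
    exact IsLocalization.map_units (Localization S) (⟨_, hd⟩ : S)
  obtain ⟨w, hw, hw₁⟩ := exists_relations_minor_eq_one hv' hD
  exact nonempty_basis_of_minor_eq_one (localizedPi_surjective hπ) hw hw₁
    (by rw [minorIdeal_localizedPi, hF, Ideal.map_bot])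

end Localization

end LinearMap

lemma LocalizedModule.exists_span_mk_one_eq_top {R : Type*} [CommRing R] {M : Type*}
    [AddCommGroup M] [Module R M] {S : Submonoid R} {ι : Type*}
    {y : ι → LocalizedModule S M} (hy : Submodule.span (Localization S) (Set.range y) = ⊤) :
    ∃ x : ι → M, Submodule.span (Localization S)
      (Set.range fun i => LocalizedModule.mk (x i) (1 : S)) = ⊤ := by
  choose x s hxs using fun i => LocalizedModule.induction_on (β := fun z => ∃ x s,
    LocalizedModule.mk x s = z) (fun x s => ⟨x, s, rfl⟩) (y i)
  refine ⟨x, eq_top_iff.2 (hy ▸ Submodule.span_le.2 ?_)⟩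
  rintro _ ⟨i, rfl⟩
  rw [← hxs, show LocalizedModule.mk (x i) (s i) = Localization.mk 1 (s i) • .mk (x i) 1 by
    rw [LocalizedModule.mk_smul_mk, one_smul, mul_one]]
  exact Submodule.smul_mem _ _ (Submodule.subset_span ⟨i, rfl⟩)

open LinearMap

section Fitting

variable {R : Type*} [CommRing R] {M : Type*} [AddCommGroup M] [Module R M]

lemma fittingIdeal_eq_iSup (j : ℕ) : fittingIdeal R M j =
    ⨆ (n : ℕ) (π : (Fin n → R) →ₗ[R] M) (_ : Surjective π), π.minorIdeal (n - j) := rfl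

lemma fittingIdeal_eq_span (j : ℕ) : fittingIdeal R M j = Ideal.span
    (⋃ (n : ℕ) (π : (Fin n → R) →ₗ[R] M) (_ : Surjective π), π.relationMinors (n - j)) := by
  simp only [Ideal.span_iUnion, fittingIdeal_eq_iSup, minorIdeal]

lemma minorIdeal_le_fittingIdeal {n : ℕ} {π : (Fin n → R) →ₗ[R] M} (hπ : Surjective π)
    (j : ℕ) : π.minorIdeal (n - j) ≤ fittingIdeal R M j :=
  le_iSup_of_le n <| le_iSup_of_le π <| le_iSup_of_le hπ le_rfl

/-- The size is `n + 1 - r`, not `n - (r - 1)`: for `r = 0` the minors have size `n + 1` and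
vanish, matching `Fitt_{-1}(M) = 0`. -/
lemma fittingIdealZ_sub_one_eq_bot_iff (r : ℕ) : fittingIdealZ R M ((r : ℤ) - 1) = ⊥ ↔
    ∀ (n : ℕ) (π : (Fin n → R) →ₗ[R] M), Surjective π → π.minorIdeal (n + 1 - r) = ⊥ := by
  rcases r with _ | r
  · simpa [fittingIdealZ] using fun n π _ => π.minorIdeal_eq_bot_of_lt (Nat.lt_succ_self n)
  · simp [fittingIdealZ, fittingIdeal_eq_iSup]

lemma minorIdeal_eq_bot_of_free_localization {r : ℕ}
    (h : ∀ (m : Ideal R) [m.IsMaximal],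
      Module.Free (Localization.AtPrime m) (LocalizedModule m.primeCompl M) ∧
      Module.finrank (Localization.AtPrime m) (LocalizedModule m.primeCompl M) = r)
    {n : ℕ} {π : (Fin n → R) →ₗ[R] M} (hπ : Surjective π) : π.minorIdeal (n + 1 - r) = ⊥ := by
  refine Ideal.span_eq_bot.2 fun d hd => eq_zero_of_localization d fun m _ => ?_
  obtain ⟨_, hrank⟩ := h m
  have := Module.Finite.of_surjective _ (localizedPi_surjective (S := m.primeCompl) hπ)
  have hbot := (π.localizedPi m.primeCompl).minorIdeal_eq_bot_of_free (k := n + 1 - r)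
    (localizedPi_surjective hπ) (by rw [hrank]; omega)
  rw [minorIdeal_localizedPi] at hbot
  rw [← Ideal.mem_bot, ← hbot]
  exact Ideal.mem_map_of_mem _ (Ideal.subset_span hd)

lemma fittingIdeal_eq_top_of_free_localization [Module.Finite R M] {r : ℕ}
    (h : ∀ (m : Ideal R) [m.IsMaximal],
      Module.Free (Localization.AtPrime m) (LocalizedModule m.primeCompl M) ∧
      Module.finrank (Localization.AtPrime m) (LocalizedModule m.primeCompl M) = r) :
    fittingIdeal R M r = ⊤ := by
  by_contra hne
  obtain ⟨m, hm, hle⟩ := Ideal.exists_le_maximal _ hne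
  obtain ⟨_, hrank⟩ := h m
  obtain ⟨x, hx⟩ := LocalizedModule.exists_span_mk_one_eq_top
    (Module.finBasisOfFinrankEq _ _ hrank).span_eq
  obtain ⟨t, y, hy⟩ := Module.Finite.exists_fin (R := R) (M := M)
  set π := Fintype.linearCombination R (Fin.append x y)
  have hπ : Surjective π := by
    rw [← range_eq_top, Fintype.range_linearCombination, eq_top_iff, ← hy]
    exact Submodule.span_mono fun _ ⟨j, hj⟩ => ⟨Fin.natAdd r j, by simpa using hj⟩
  have h1 : (1 : Localization.AtPrime m) ∈ (π.minorIdeal t).map (algebraMap R _) := by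
    have happend : (fun i => LocalizedModule.mk (Fin.append x y i) (1 : m.primeCompl)) =
        Fin.append (fun i => .mk (x i) 1) (fun j => .mk (y j) 1) := by
      ext i
      cases i using Fin.addCases <;> simp
    rw [← minorIdeal_localizedPi, localizedPi_linearCombination, happend]
    exact one_mem_minorIdeal_linearCombination_append hx _
  have hmax : (π.minorIdeal t).map (algebraMap R (Localization.AtPrime m)) ≤
      IsLocalRing.maximalIdeal _ := by
    rw [← IsLocalization.AtPrime.map_eq_maximalIdeal m]
    refine Ideal.map_mono (le_trans ?_ hle)
    simpa using minorIdeal_le_fittingIdeal hπ r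
  exact (IsLocalRing.maximalIdeal.isMaximal _).ne_top ((Ideal.eq_top_iff_one _).2 (hmax h1))

lemma free_localizedModule_of_fittingIdeal {r : ℕ}
    (hF : ∀ (n : ℕ) (π : (Fin n → R) →ₗ[R] M), Surjective π → π.minorIdeal (n + 1 - r) = ⊥)
    (htop : fittingIdeal R M r = ⊤) (p : Ideal R) [hp : p.IsPrime] :
    Module.Free (Localization.AtPrime p) (LocalizedModule p.primeCompl M) ∧
      Module.finrank (Localization.AtPrime p) (LocalizedModule p.primeCompl M) = r := by
  obtain ⟨d, hd, hdp⟩ : ∃ d ∈ ⋃ (n : ℕ) (π : (Fin n → R) →ₗ[R] M) (_ : Surjective π),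
      π.relationMinors (n - r), d ∉ p := by
    by_contra! h
    exact hp.ne_top <| top_le_iff.1 <|
      htop ▸ fittingIdeal_eq_span (R := R) (M := M) r ▸ Ideal.span_le.2 h
  simp only [Set.mem_iUnion] at hd
  obtain ⟨n, π, hπ, v, ρ, hv, rfl⟩ := hd
  have hrn : r ≤ n := by
    by_contra hrn
    have h0 := hF n π hπ
    rw [show n + 1 - r = 0 by omega, minorIdeal_zero] at h0
    have hd0 : (of fun i l => v l (ρ i)).det ∈ (⊥ : Ideal R) := h0 ▸ Submodule.mem_top
    exact hdp (Ideal.mem_bot.1 hd0 ▸ p.zero_mem)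
  obtain ⟨b⟩ := nonempty_basis_localizedModule hπ hv (S := p.primeCompl) hdp
    (minorIdeal_sub_add_one_eq_bot (hF n π hπ))
  have hρ : Injective ρ := fun i i' hii' => by_contra fun hne => hdp <|
    det_zero_of_row_eq (M := of fun i l => v l (ρ i)) hne (congrArg (fun j l => v l j) hii') ▸
      p.zero_mem
  refine ⟨.of_basis b, ?_⟩
  rw [Module.finrank_eq_card_basis b, Fintype.card_subtype_compl, Fintype.card_fin,
    Set.card_range_of_injective hρ, Fintype.card_fin]
  omega

lemma finitePresentation_of_fittingIdeal {r : ℕ}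
    (hF : ∀ (n : ℕ) (π : (Fin n → R) →ₗ[R] M), Surjective π → π.minorIdeal (n + 1 - r) = ⊥)
    (htop : fittingIdeal R M r = ⊤) : Module.FinitePresentation R M := by
  refine .of_localizationSpan _ ((fittingIdeal_eq_span r).symm.trans htop) fun d => ?_
  have hd := d.2
  simp only [Set.mem_iUnion] at hd
  obtain ⟨n, π, hπ, v, ρ, hv, hd⟩ := hd
  obtain ⟨b⟩ := nonempty_basis_localizedModule (S := .powers (d : R)) hπ hv
    (by rw [← hd]; exact Submonoid.mem_powers _)
    (minorIdeal_sub_add_one_eq_bot (hF n π hπ))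
  have := Module.Free.of_basis b
  have := Module.Finite.of_basis b
  apply Module.finitePresentation_of_projective

end Fitting

theorem projective_constant_rank_iff_fittingIdeals
    (R : Type*) [CommRing R] (M : Type*) [AddCommGroup M] [Module R M]
    [Module.Finite R M] (r : ℕ) :
    (Module.Projective R M ∧
        ∀ (p : Ideal R) [p.IsPrime],
          Module.Free (Localization.AtPrime p) (LocalizedModule p.primeCompl M) ∧
          Module.finrank (Localization.AtPrime p) (LocalizedModule p.primeCompl M) = r)
      ↔ (fittingIdealZ R M ((r : ℤ) - 1) = ⊥ ∧ fittingIdeal R M r = ⊤) := by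
  rw [fittingIdealZ_sub_one_eq_bot_iff]
  constructor
  · rintro ⟨-, hloc⟩
    exact ⟨fun n π hπ => minorIdeal_eq_bot_of_free_localization (fun m _ => hloc m) hπ,
      fittingIdeal_eq_top_of_free_localization fun m _ => hloc m⟩
  · rintro ⟨hF, htop⟩
    have hloc := free_localizedModule_of_fittingIdeal hF htop
    have := finitePresentation_of_fittingIdeal hF htop
    refine ⟨Module.projective_of_localization_maximal fun m hm => ?_, hloc⟩
    have := (hloc m).1
    infer_instance
end

section
/- Let D be a triangulated category and A ⊆ D an admissible full triangulated subcategory (so there are semiorthogonal decompositions D = ⟨A^⊥, A⟩ = ⟨A, ^⊥A⟩). Then the left mutation functor L_A = i_{A^⊥} ∘ i*_{A^⊥} and the right mutation functor R_A = i_{^⊥A} ∘ i^!_{^⊥A} restrict to mutually inverse equivalences L_A|_{^⊥A}: ^⊥A ≃ A^⊥ and R_A|_{A^⊥}: A^⊥ ≃ ^⊥A. -/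
/-!
STATEMENT 9: let `D` be a triangulated category and `A ⊆ D` an admissible full triangulated
subcategory, so that there are semiorthogonal decompositions `D = ⟨A^⊥, A⟩ = ⟨A, ^⊥A⟩`, i.e.
the inclusion of `A^⊥` admits a left adjoint `i*_{A^⊥}` and the inclusion of `^⊥A` admits a
right adjoint `i^!_{^⊥A}` (and the inclusion of `A` admits both adjoints).  Then the left
mutation functor `L_A = i_{A^⊥} ∘ i*_{A^⊥}` and the right mutation functor
`R_A = i_{^⊥A} ∘ i^!_{^⊥A}` restrict to mutually inverse equivalences
`L_A|_{^⊥A} : ^⊥A ≃ A^⊥` and `R_A|_{A^⊥} : A^⊥ ≃ ^⊥A`.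
-/

open CategoryTheory CategoryTheory.Limits CategoryTheory.Pretriangulated

universe v u

variable {C : Type u} [Category.{v} C]

/-- The right orthogonal `A^⊥ = {X | Hom(a, X[n]) = 0 for all a ∈ A, n ∈ ℤ}`. -/
def rightOrth [Preadditive C] [HasShift C ℤ] (A : C → Prop) : C → Prop :=
  fun X => ∀ ⦃a : C⦄, A a → ∀ n : ℤ, ∀ f : a ⟶ (X⟦n⟧ : C), f = 0

/-- The left orthogonal `^⊥A = {X | Hom(X, a[n]) = 0 for all a ∈ A, n ∈ ℤ}`. -/
def leftOrth [Preadditive C] [HasShift C ℤ] (A : C → Prop) : C → Prop :=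
  fun X => ∀ ⦃a : C⦄, A a → ∀ n : ℤ, ∀ f : X ⟶ (a⟦n⟧ : C), f = 0


/-!
Composing the adjunctions `i_{^⊥A} ⊣ i^!_{^⊥A}` and `i*_{A^⊥} ⊣ i_{A^⊥}` gives an adjunction
`L_A|_{^⊥A} ⊣ R_A|_{A^⊥}`, so it suffices that both functors are fully faithful. For any `X'`,
the fiber `W` of the unit `X' ⟶ L_A X'` is left orthogonal to `A^⊥`. Since `i_A` has a right
adjoint, the cone of the counit `i_A i^!_A W ⟶ W` lies in `A^⊥`, so this counit splits and `W` is
a retract of an object of `A`. Hence `Hom(X, W[n]) = 0` for `X ∈ ^⊥A`, and the long exact sequence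
of the triangle `W → X' → L_A X'` gives `Hom(X, X') ≅ Hom(X, L_A X') ≅ Hom(L_A X, L_A X')`.
Dually, `R_A` is fully faithful on `A^⊥`.
-/

open Function

namespace CategoryTheory.Adjunction

variable {D : Type*} [Category D] {F : C ⥤ D} {G : D ⥤ C}

lemma map_bijective_iff_comp_unit_bijective (adj : F ⊣ G) (X Y : C) :
    Bijective (F.map : (X ⟶ Y) → _) ↔ Bijective (fun f : X ⟶ Y => f ≫ adj.unit.app Y) := by
  rw [← Bijective.of_comp_iff' (adj.homEquiv X (F.obj Y)).bijective]
  congr! 1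
  funext f
  simp [homEquiv_unit]

lemma map_bijective_iff_counit_comp_bijective (adj : F ⊣ G) (X Y : D) :
    Bijective (G.map : (X ⟶ Y) → _) ↔ Bijective (fun f : X ⟶ Y => adj.counit.app X ≫ f) := by
  rw [← Bijective.of_comp_iff' (adj.homEquiv (G.obj X) Y).symm.bijective]
  congr! 1
  funext f
  simp [homEquiv_counit]

lemma unit_comp_bijective (adj : F ⊣ G) (hG : G.FullyFaithful) (X : C) (Y : D) :
    Bijective (fun f : G.obj (F.obj X) ⟶ G.obj Y => adj.unit.app X ≫ f) := by
  have h : (fun f => adj.unit.app X ≫ f) ∘ G.map = adj.homEquiv X Y := by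
    funext f
    simp [homEquiv_unit]
  exact (Bijective.of_comp_iff _ (hG.map_bijective _ _)).1 (h ▸ (adj.homEquiv X Y).bijective)

lemma comp_counit_bijective (adj : F ⊣ G) (hF : F.FullyFaithful) (X : C) (Y : D) :
    Bijective (fun f : F.obj X ⟶ F.obj (G.obj Y) => f ≫ adj.counit.app Y) := by
  have h : (fun f => f ≫ adj.counit.app Y) ∘ F.map = (adj.homEquiv X Y).symm := by
    funext f
    simp [homEquiv_counit]
  exact (Bijective.of_comp_iff _ (hF.map_bijective _ _)).1 (h ▸ (adj.homEquiv X Y).symm.bijective)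

end CategoryTheory.Adjunction

namespace rightOrth

variable [Preadditive C] [HasShift C ℤ] {S : C → Prop}

lemma eq_zero {a Z : C} (hZ : rightOrth S Z) (ha : S a) (f : a ⟶ Z) : f = 0 := by
  rw [← cancel_mono ((shiftFunctorZero C ℤ).inv.app Z), zero_comp]
  exact hZ ha 0 _

lemma shift {Z : C} (hZ : rightOrth S Z) (n : ℤ) : rightOrth S (Z⟦n⟧) := fun a ha m f => by
  rw [← cancel_mono ((shiftFunctorAdd' C n m (n + m) rfl).inv.app Z), zero_comp]
  exact hZ ha (n + m) _

lemma of_retract {W Z : C} (e : Retract W Z) (hZ : rightOrth S Z) : rightOrth S W :=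
  fun a ha n f => calc
    f = (f ≫ (e.map (shiftFunctor C n)).i) ≫ (e.map (shiftFunctor C n)).r := by
      rw [Category.assoc, Retract.retract, Category.comp_id]
    _ = 0 := by rw [hZ ha n (f ≫ _), zero_comp]

end rightOrth

namespace leftOrth

variable [Preadditive C] [HasShift C ℤ] {S : C → Prop}

lemma eq_zero {X a : C} (hX : leftOrth S X) (ha : S a) (f : X ⟶ a) : f = 0 := by
  rw [← cancel_mono ((shiftFunctorZero C ℤ).inv.app a), zero_comp]
  exact hX ha 0 _

lemma shift [∀ n : ℤ, (shiftFunctor C n).Additive] (hS : ∀ c, S c → ∀ n : ℤ, S (c⟦n⟧))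
    {X : C} (hX : leftOrth S X) (n : ℤ) : leftOrth S (X⟦n⟧) := fun a ha m f => by
  rw [← (shiftFunctor C (-n)).map_eq_zero_iff,
    ← cancel_epi ((shiftFunctorCompIsoId C n (-n) (add_neg_cancel n)).inv.app X), comp_zero]
  exact hX (hS a ha m) (-n) _

lemma of_retract {X Y : C} (e : Retract X Y) (hY : leftOrth S Y) : leftOrth S X :=
  fun a ha n f => calc
    f = e.i ≫ e.r ≫ f := by simp
    _ = 0 := by rw [hY ha n (e.r ≫ f), comp_zero]

end leftOrth

lemma rightOrth_of_forall_eq_zero [Preadditive C] [HasShift C ℤ]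
    [∀ n : ℤ, (shiftFunctor C n).Additive] {S : C → Prop}
    (hS : ∀ c, S c → ∀ n : ℤ, S (c⟦n⟧)) {Z : C} (hZ : ∀ a, S a → ∀ f : a ⟶ Z, f = 0) :
    rightOrth S Z := fun a ha n f => by
  rw [← (shiftFunctor C (-n)).map_eq_zero_iff,
    ← cancel_mono ((shiftFunctorCompIsoId C n (-n) (add_neg_cancel n)).hom.app Z), zero_comp]
  exact hZ _ (hS a ha (-n)) _

section Pretriangulated

variable [HasZeroObject C] [Preadditive C] [HasShift C ℤ]
  [∀ n : ℤ, (shiftFunctor C n).Additive] [Pretriangulated C]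

lemma comp_mor₂_bijective_of_distTriang {W X Y Z : C} {f : W ⟶ X} {e : X ⟶ Y}
    {h : Y ⟶ W⟦(1 : ℤ)⟧} (hT : Triangle.mk f e h ∈ distTriang C)
    (h₀ : ∀ g : Z ⟶ W, g = 0) (h₁ : ∀ g : Z ⟶ W⟦(1 : ℤ)⟧, g = 0) :
    Bijective (fun φ : Z ⟶ X => φ ≫ e) := by
  refine ⟨fun a b hab => sub_eq_zero.mp ?_, fun φ => ?_⟩
  · obtain ⟨ρ, hρ⟩ := Triangle.coyoneda_exact₂ _ hT (a - b)
      (by rwa [Preadditive.sub_comp, sub_eq_zero] : (a - b) ≫ e = 0)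
    rw [hρ, h₀ ρ]
    exact zero_comp
  · obtain ⟨ρ, hρ⟩ := Triangle.coyoneda_exact₃ _ hT φ (h₁ _)
    exact ⟨ρ, hρ.symm⟩

lemma mor₁_comp_bijective_of_distTriang {X Y V Z : C} {e : X ⟶ Y} {g : Y ⟶ V}
    {h : V ⟶ X⟦(1 : ℤ)⟧} (hT : Triangle.mk e g h ∈ distTriang C)
    (h₀ : ∀ f : V ⟶ Z, f = 0) (h₁ : ∀ f : V⟦(-1 : ℤ)⟧ ⟶ Z, f = 0) :
    Bijective (fun φ : Y ⟶ Z => e ≫ φ) := by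
  refine ⟨fun a b hab => sub_eq_zero.mp ?_, fun φ => ?_⟩
  · obtain ⟨ρ, hρ⟩ := Triangle.yoneda_exact₂ _ hT (a - b)
      (by rwa [Preadditive.comp_sub, sub_eq_zero] : e ≫ (a - b) = 0)
    rw [hρ, h₀ ρ]
    exact comp_zero
  · obtain ⟨ρ, hρ⟩ := Triangle.yoneda_exact₂ _ (inv_rot_of_distTriang _ hT) φ (h₁ _)
    exact ⟨ρ, hρ.symm⟩

lemma fiber_hom_eq_zero_of_mor₂_comp_bijective (S : C → Prop)
    (hS : ∀ c, S c → ∀ n : ℤ, S (c⟦n⟧)) {W X Y c : C} {f : W ⟶ X} {e : X ⟶ Y}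
    {h : Y ⟶ W⟦(1 : ℤ)⟧} (hT : Triangle.mk f e h ∈ distTriang C)
    (he : ∀ c, S c → Bijective (fun ψ : Y ⟶ c => e ≫ ψ)) (hc : S c) (ψ : W ⟶ c) : ψ = 0 := by
  have he₁ : Bijective (fun ψ : Y⟦(1 : ℤ)⟧ ⟶ c⟦(1 : ℤ)⟧ => e⟦(1 : ℤ)⟧' ≫ ψ) :=
    ((shiftEquiv C (1 : ℤ)).toAdjunction.map_comp_bijective_iff e _).2
      (he _ (hS _ (hS c hc 1) (-1)))
  have hfe : f ≫ e = 0 := comp_distTriang_mor_zero₁₂ _ hT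
  have heh : e ≫ h = 0 := comp_distTriang_mor_zero₂₃ _ hT
  have hψ : h ≫ ψ⟦(1 : ℤ)⟧' = 0 := (he _ (hS c hc 1)).1 <| by
    simp only [reassoc_of% heh, zero_comp, comp_zero]
  obtain ⟨g, hg⟩ := Triangle.yoneda_exact₃ _ (rot_of_distTriang _ hT) _ hψ
  obtain ⟨g', rfl⟩ := he₁.2 g
  apply (shiftFunctor C (1 : ℤ)).map_injective
  rw [hg, Functor.map_zero]
  change (-f⟦(1 : ℤ)⟧') ≫ e⟦(1 : ℤ)⟧' ≫ g' = 0
  rw [Preadditive.neg_comp, ← Functor.map_comp_assoc, hfe, Functor.map_zero, zero_comp, neg_zero]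

lemma hom_cofiber_eq_zero_of_comp_mor₁_bijective (S : C → Prop)
    (hS : ∀ c, S c → ∀ n : ℤ, S (c⟦n⟧)) {X Y V c : C} {e : X ⟶ Y} {g : Y ⟶ V}
    {h : V ⟶ X⟦(1 : ℤ)⟧} (hT : Triangle.mk e g h ∈ distTriang C)
    (he : ∀ c, S c → Bijective (fun ψ : c ⟶ X => ψ ≫ e)) (hc : S c) (ψ : c ⟶ V) : ψ = 0 := by
  have he₁ : Bijective (fun φ : c ⟶ X⟦(1 : ℤ)⟧ => φ ≫ e⟦(1 : ℤ)⟧') :=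
    ((shiftEquiv C (1 : ℤ)).symm.toAdjunction.comp_map_bijective_iff e c).2
      (he _ (hS c hc (-1)))
  have heg : e ≫ g = 0 := comp_distTriang_mor_zero₁₂ _ hT
  have hhe : h ≫ e⟦(1 : ℤ)⟧' = 0 := comp_distTriang_mor_zero₃₁ _ hT
  have hψ : ψ ≫ h = 0 := he₁.1 <| by
    simp only [Category.assoc, hhe, comp_zero, zero_comp]
  obtain ⟨ρ, hρ⟩ := Triangle.coyoneda_exact₃ _ hT ψ hψ
  obtain ⟨ρ', rfl⟩ := (he c hc).2 ρ
  rw [hρ]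
  change (ρ' ≫ e) ≫ g = 0
  rw [Category.assoc, heg, comp_zero]

end Pretriangulated

section Admissible

variable [HasZeroObject C] [Preadditive C] [HasShift C ℤ]
  [∀ n : ℤ, (shiftFunctor C n).Additive] [Pretriangulated C] {A : C → Prop}

lemma leftOrth_rightOrth_of_distTriang_unit {P : C ⥤ ObjectProperty.FullSubcategory (rightOrth A)}
    (adj : P ⊣ ObjectProperty.ι (rightOrth A)) {W X : C} {f : W ⟶ X}
    {h : _ ⟶ W⟦(1 : ℤ)⟧} (hT : Triangle.mk f (adj.unit.app X) h ∈ distTriang C) :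
    leftOrth (rightOrth A) W := fun _ hc n =>
  fiber_hom_eq_zero_of_mor₂_comp_bijective (rightOrth A) (fun _ hc n => hc.shift n) hT
    (fun c hc => adj.unit_comp_bijective (ObjectProperty.fullyFaithfulι _) X ⟨c, hc⟩) (hc.shift n)

lemma rightOrth_leftOrth_of_distTriang_counit (hA : ∀ X, A X → ∀ n : ℤ, A (X⟦n⟧))
    {Q : C ⥤ ObjectProperty.FullSubcategory (leftOrth A)}
    (adj : ObjectProperty.ι (leftOrth A) ⊣ Q) {Y V : C} {g : Y ⟶ V}
    {h : V ⟶ _} (hT : Triangle.mk (adj.counit.app Y) g h ∈ distTriang C) :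
    rightOrth (leftOrth A) V :=
  rightOrth_of_forall_eq_zero (fun _ hc n => hc.shift hA n) fun _ hc =>
    hom_cofiber_eq_zero_of_comp_mor₁_bijective (leftOrth A) (fun _ hc n => hc.shift hA n) hT
      (fun c hc => adj.comp_counit_bijective (ObjectProperty.fullyFaithfulι _) ⟨c, hc⟩ Y) hc

lemma rightOrth_leftOrth_of_leftOrth_rightOrth (hA : ∀ X, A X → ∀ n : ℤ, A (X⟦n⟧))
    {R : C ⥤ ObjectProperty.FullSubcategory A} (adj : ObjectProperty.ι A ⊣ R) {W : C}
    (hW : leftOrth (rightOrth A) W) : rightOrth (leftOrth A) W := by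
  obtain ⟨Z, g, h, hT⟩ := distinguished_cocone_triangle (adj.counit.app W)
  have hZ : rightOrth A Z := rightOrth_of_forall_eq_zero hA fun _ ha =>
    hom_cofiber_eq_zero_of_comp_mor₁_bijective A hA hT
      (fun c hc => adj.comp_counit_bijective (ObjectProperty.fullyFaithfulι A) ⟨c, hc⟩ W) ha
  obtain ⟨s, hs⟩ := Triangle.coyoneda_exact₂ _ hT (𝟙 W)
    (by rw [hW.eq_zero hZ g]; exact comp_zero)
  exact rightOrth.of_retract ⟨s, adj.counit.app W, hs.symm⟩
    fun _ hX n => hX (R.obj W).property n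

lemma leftOrth_rightOrth_of_rightOrth_leftOrth (hA : ∀ X, A X → ∀ n : ℤ, A (X⟦n⟧))
    {L : C ⥤ ObjectProperty.FullSubcategory A} (adj : L ⊣ ObjectProperty.ι A) {V : C}
    (hV : rightOrth (leftOrth A) V) : leftOrth (rightOrth A) V := by
  obtain ⟨U, m, h, hT⟩ := distinguished_cocone_triangle₁ (adj.unit.app V)
  have hU : leftOrth A U := fun a ha n =>
    fiber_hom_eq_zero_of_mor₂_comp_bijective A hA hT
      (fun c hc => adj.unit_comp_bijective (ObjectProperty.fullyFaithfulι A) V ⟨c, hc⟩) (hA a ha n)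
  obtain ⟨r, hr⟩ := Triangle.yoneda_exact₂ _ hT (𝟙 V)
    (by rw [hV.eq_zero hU m]; exact zero_comp)
  exact leftOrth.of_retract ⟨adj.unit.app V, r, hr.symm⟩
    fun _ hY n => hY (L.obj V).property n

lemma comp_unit_bijective_of_leftOrth (hA : ∀ X, A X → ∀ n : ℤ, A (X⟦n⟧))
    {R : C ⥤ ObjectProperty.FullSubcategory A} (adjA : ObjectProperty.ι A ⊣ R)
    {P : C ⥤ ObjectProperty.FullSubcategory (rightOrth A)}
    (adjP : P ⊣ ObjectProperty.ι (rightOrth A)) {X : C} (hX : leftOrth A X) (Y : C) :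
    Bijective (fun φ : X ⟶ Y => φ ≫ adjP.unit.app Y) := by
  obtain ⟨W, f, h, hT⟩ := distinguished_cocone_triangle₁ (adjP.unit.app Y)
  have hW := rightOrth_leftOrth_of_leftOrth_rightOrth hA adjA
    (leftOrth_rightOrth_of_distTriang_unit adjP hT)
  exact comp_mor₂_bijective_of_distTriang hT (hW.eq_zero hX) (hW hX 1)

lemma counit_comp_bijective_of_rightOrth (hA : ∀ X, A X → ∀ n : ℤ, A (X⟦n⟧))
    {L : C ⥤ ObjectProperty.FullSubcategory A} (adjA : L ⊣ ObjectProperty.ι A)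
    {Q : C ⥤ ObjectProperty.FullSubcategory (leftOrth A)}
    (adjQ : ObjectProperty.ι (leftOrth A) ⊣ Q) (X : C) {Y : C} (hY : rightOrth A Y) :
    Bijective (fun φ : X ⟶ Y => adjQ.counit.app X ≫ φ) := by
  obtain ⟨V, g, h, hT⟩ := distinguished_cocone_triangle (adjQ.counit.app X)
  have hV := leftOrth_rightOrth_of_rightOrth_leftOrth hA adjA
    (rightOrth_leftOrth_of_distTriang_counit hA adjQ hT)
  exact mor₁_comp_bijective_of_distTriang hT (hV.eq_zero hY)
    ((hV.shift (fun _ hc n => hc.shift n) (-1)).eq_zero hY)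

end Admissible

theorem mutation_equivalence_of_admissible
    {C : Type u} [Category.{v} C] [HasZeroObject C] [Preadditive C] [HasShift C ℤ]
    [∀ n : ℤ, (shiftFunctor C n).Additive] [Pretriangulated C] [IsTriangulated C]
    (A : C → Prop)
    -- `A` is a full triangulated subcategory: closed under shifts and triangles
    (hshift : ∀ X, A X → ∀ n : ℤ, A (X⟦n⟧))
    (htriangle : ∀ T : Triangle C, (T ∈ distTriang C) → A T.obj₁ → A T.obj₂ → A T.obj₃)
    -- `A` is admissible: its inclusion has a left adjoint and a right adjoint
    (Aleft : C ⥤ ObjectProperty.FullSubcategory A) (adjA₁ : Aleft ⊣ ObjectProperty.ι A)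
    (Aright : C ⥤ ObjectProperty.FullSubcategory A) (adjA₂ : ObjectProperty.ι A ⊣ Aright)
    -- the projection `i*_{A^⊥}` (left adjoint of the inclusion of `A^⊥`), giving `D = ⟨A^⊥, A⟩`
    (P : C ⥤ ObjectProperty.FullSubcategory (rightOrth A))
    (adjP : P ⊣ ObjectProperty.ι (rightOrth A))
    -- the projection `i^!_{^⊥A}` (right adjoint of the inclusion of `^⊥A`), giving `D = ⟨A, ^⊥A⟩`
    (Q : C ⥤ ObjectProperty.FullSubcategory (leftOrth A))
    (adjQ : ObjectProperty.ι (leftOrth A) ⊣ Q) :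
    -- the mutations `L_A = i_{A^⊥} ∘ i*_{A^⊥}` and `R_A = i_{^⊥A} ∘ i^!_{^⊥A}` restrict to
    -- mutually inverse equivalences `^⊥A ≃ A^⊥` and `A^⊥ ≃ ^⊥A`:
    ∃ E : ObjectProperty.FullSubcategory (leftOrth A) ≌ ObjectProperty.FullSubcategory (rightOrth A),
      Nonempty ((ObjectProperty.ι (leftOrth A) ⋙
            (P ⋙ ObjectProperty.ι (rightOrth A)))
          ≅ E.functor ⋙ ObjectProperty.ι (rightOrth A)) ∧
      Nonempty ((ObjectProperty.ι (rightOrth A) ⋙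
            (Q ⋙ ObjectProperty.ι (leftOrth A)))
          ≅ E.inverse ⋙ ObjectProperty.ι (leftOrth A)) := by
  have hL (X X' : ObjectProperty.FullSubcategory (leftOrth A)) :
      Bijective ((ObjectProperty.ι _ ⋙ P).map : (X ⟶ X') → _) :=
    ((adjP.map_bijective_iff_comp_unit_bijective _ _).2
      (comp_unit_bijective_of_leftOrth hshift adjA₂ adjP X.property _)).comp
      ((ObjectProperty.fullyFaithfulι _).map_bijective X X')
  have hR (Y Y' : ObjectProperty.FullSubcategory (rightOrth A)) :
      Bijective ((ObjectProperty.ι _ ⋙ Q).map : (Y ⟶ Y') → _) :=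
    ((adjQ.map_bijective_iff_counit_comp_bijective _ _).2
      (counit_comp_bijective_of_rightOrth hshift adjA₁ adjQ _ Y'.property)).comp
      ((ObjectProperty.fullyFaithfulι _).map_bijective Y Y')
  have : (ObjectProperty.ι _ ⋙ P).Full := ⟨fun f => (hL _ _).2 f⟩
  have : (ObjectProperty.ι _ ⋙ P).Faithful := ⟨fun h => (hL _ _).1 h⟩
  have : (ObjectProperty.ι _ ⋙ Q).Full := ⟨fun f => (hR _ _).2 f⟩
  have : (ObjectProperty.ι _ ⋙ Q).Faithful := ⟨fun h => (hR _ _).1 h⟩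
  exact ⟨(adjQ.comp adjP).toEquivalence, ⟨(Functor.associator _ _ _).symm⟩,
    ⟨(Functor.associator _ _ _).symm⟩⟩
end

section
/- Let X be a connected scheme and G a quasi-coherent O_X-module admitting, Zariski-locally, a finite resolution 0 → F_n → … → F_1 → F_0 → G → 0 by finite free modules. Then the function x ↦ Σ_{i=0}^n (−1)^i rank_{O_{X,x}}(F_{i,x}) is a well-defined locally constant function on X independent of the choice of local resolution; moreover this rank is ≥ 0 whenever G ≠ 0 has homological dimension ≤ n in this sense. -/
/-!
Localize at a minimal prime `p` of `R`: the ring `S = R_p` is local of dimension zero, so every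
element of its maximal ideal is nilpotent, and finitely many such elements have a common nonzero
annihilator. Consequently an injective map of free `S`-modules stays injective modulo the maximal
ideal, so its cokernel is free and the sequence splits. Cutting the base-changed resolution into
short exact sequences shows that `S ⊗ M` is free of rank `Σ (-1)^i c_i`, which is therefore
independent of the resolution and nonnegative.
-/

open IsLocalRing TensorProduct Module

theorem Ideal.exists_ne_zero_forall_mul_eq_zero {S : Type*} [CommSemiring S] [Nontrivial S]
    {I : Ideal S} (hI : IsNilpotent I) : ∃ s ≠ 0, ∀ x ∈ I, s * x = 0 := by
  classical
  have hN : ∃ N, I ^ (N + 1) = ⊥ := by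
    obtain ⟨N, hN⟩ := hI
    exact ⟨N, le_bot_iff.mp (Ideal.pow_le_pow_right N.le_succ |>.trans_eq hN)⟩
  have hmin : I ^ Nat.find hN ≠ ⊥ := by
    intro h
    cases hk : Nat.find hN with
    | zero => rw [hk, pow_zero, Ideal.one_eq_top] at h; exact top_ne_bot h
    | succ k => exact Nat.find_min hN (by omega) (hk ▸ h)
  obtain ⟨s, hs, hs0⟩ := Submodule.exists_mem_ne_zero_of_ne_bot hmin
  refine ⟨s, hs0, fun x hx => ?_⟩
  have : s * x ∈ I ^ (Nat.find hN + 1) := pow_succ I _ ▸ Ideal.mul_mem_mul hs hx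
  simpa [Nat.find_spec hN] using this

theorem Module.Basis.one_tmul_eq_zero_iff {S N ι : Type*} [CommRing S] [AddCommGroup N]
    [Module S N] (I : Ideal S) (b : Basis ι S N) (v : N) :
    (1 : S ⧸ I) ⊗ₜ[S] v = 0 ↔ ∀ i, b.repr v i ∈ I := by
  rw [← LinearEquiv.map_eq_zero_iff (b.baseChange (S ⧸ I)).repr, Finsupp.ext_iff]
  simp [Algebra.smul_def, Ideal.Quotient.eq_zero_iff_mem]

section ZeroDimensional

variable {S K N P : Type*} [CommRing S] [IsLocalRing S] [Ring.KrullDimLE 0 S]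
  [AddCommGroup K] [Module S K] [AddCommGroup N] [Module S N] [AddCommGroup P] [Module S P]

theorem LinearMap.lTensor_residueField_injective_of_injective [Module.Free S K] [Module.Free S N]
    {f : K →ₗ[S] N} (hf : Function.Injective f) :
    Function.Injective (f.lTensor (ResidueField S)) := by
  rw [injective_iff_map_eq_zero]
  intro x hx
  obtain ⟨v, rfl⟩ := TensorProduct.mk_surjective S K (ResidueField S)
    Ideal.Quotient.mk_surjective x
  let bK := Free.chooseBasis S K
  let bN := Free.chooseBasis S N
  have hfv : ∀ j, bN.repr (f v) j ∈ maximalIdeal S :=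
    (bN.one_tmul_eq_zero_iff (maximalIdeal S) (f v)).mp hx
  -- the coordinates of `f v` are nilpotent, so some `s ≠ 0` kills `f v`, hence `v`
  obtain ⟨s, hs0, hs⟩ := Ideal.exists_ne_zero_forall_mul_eq_zero
    (I := Ideal.span (Set.range (bN.repr (f v))))
    ((Ideal.FG.isNilpotent_iff_le_nilradical
      (Submodule.fg_span (Finsupp.finite_range _))).mpr <| by
      rw [Ring.KrullDimLE.nilradical_eq_maximalIdeal, Ideal.span_le]
      rintro _ ⟨j, rfl⟩
      exact hfv j)
  have hsv : s • v = 0 := hf <| bN.repr.injective <| Finsupp.ext fun j => by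
    simpa using hs _ (Ideal.subset_span ⟨j, rfl⟩)
  refine (bK.one_tmul_eq_zero_iff (maximalIdeal S) v).mpr fun i => ?_
  by_contra hi
  have hunit : IsUnit (bK.repr v i) := by simpa [mem_maximalIdeal, mem_nonunits_iff] using hi
  exact hs0 (hunit.mul_left_eq_zero.mp (by simpa using congr_arg (bK.repr · i) hsv))

theorem Module.free_of_exact_of_injective [Module.Free S K] [Module.Finite S K]
    [Module.Free S N] [Module.Finite S N] {f : K →ₗ[S] N} {g : N →ₗ[S] P}
    (hf : Function.Injective f) (hg : Function.Surjective g) (h : Function.Exact f g) :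
    Module.Free S P :=
  Module.free_of_lTensor_residueField_injective f g hg h
    (LinearMap.lTensor_residueField_injective_of_injective hf)

end ZeroDimensional

theorem Module.finrank_eq_add_of_exact {R A B C : Type*} [CommRing R] [StrongRankCondition R]
    [AddCommGroup A] [Module R A] [AddCommGroup B] [Module R B] [AddCommGroup C] [Module R C]
    [Module.Free R A] [Module.Finite R A] [Module.Free R C] [Module.Finite R C]
    {f : A →ₗ[R] B} {g : B →ₗ[R] C}
    (hf : Function.Injective f) (hg : Function.Surjective g) (h : Function.Exact f g) :
    finrank R B = finrank R A + finrank R C := by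
  obtain ⟨l, hl⟩ := Module.projective_lifting_property g LinearMap.id hg
  rw [(h.splitSurjectiveEquiv hf ⟨l, hl⟩).1.finrank_eq, Module.finrank_prod]

theorem Function.Exact.subtype_rangeRestrict {R A B C : Type*} [Ring R] [AddCommGroup A]
    [Module R A] [AddCommGroup B] [Module R B] [AddCommGroup C] [Module R C]
    {f : A →ₗ[R] B} {g : B →ₗ[R] C} (h : Function.Exact f g) :
    Function.Exact (LinearMap.range f).subtype g.rangeRestrict := by
  rw [LinearMap.exact_iff, LinearMap.ker_rangeRestrict, Submodule.range_subtype,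
    h.linearMap_ker_eq]

section Resolution

variable {S : Type*} [CommRing S] [IsLocalRing S] [Ring.KrullDimLE 0 S]

theorem free_range_and_finrank_of_exact {F : ℕ → Type*} [∀ i, AddCommGroup (F i)]
    [∀ i, Module S (F i)] [∀ i, Module.Free S (F i)] [∀ i, Module.Finite S (F i)]
    (d : ∀ i, F (i + 1) →ₗ[S] F i)
    (hd : ∀ i, Function.Exact (d (i + 1)) (d i)) (n : ℕ) [Subsingleton (F (n + 1))] :
    Module.Free S (LinearMap.range (d 0)) ∧
      (finrank S (LinearMap.range (d 0)) : ℤ) =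
        ∑ i ∈ Finset.range n, (-1 : ℤ) ^ i * finrank S (F (i + 1)) := by
  induction n generalizing F with
  | zero =>
    have h0 : LinearMap.range (d 0) = ⊥ := by
      rw [LinearMap.range_eq_bot]; ext x; simp [Subsingleton.elim x 0]
    rw [h0]
    exact ⟨inferInstance, by simp⟩
  | succ n ih =>
    obtain ⟨hfree, hrank⟩ :=
      ih (F := fun i => F (i + 1)) (fun i => d (i + 1)) (fun i => hd (i + 1))
    -- `0 → range (d 1) → F 1 → range (d 0) → 0` is exact
    have hexact := (hd 0).subtype_rangeRestrict
    have hinj := (LinearMap.range (d 1)).injective_subtype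
    have hsurj := (d 0).surjective_rangeRestrict
    have : Module.Free S (LinearMap.range (d 0)) :=
      Module.free_of_exact_of_injective hinj hsurj hexact
    refine ⟨this, ?_⟩
    have := Module.finrank_eq_add_of_exact hinj hsurj hexact
    change (finrank S (LinearMap.range (d 1)) : ℤ) = _ at hrank
    rw [Finset.sum_range_succ']
    change _ = _ + (-1) ^ 0 * (finrank S (F 1) : ℤ)
    simp only [pow_succ, mul_neg_one, neg_mul, Finset.sum_neg_distrib, pow_zero, one_mul]
    omega

theorem free_and_finrank_of_finite_free_resolution {F : ℕ → Type*} [∀ i, AddCommGroup (F i)]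
    [∀ i, Module S (F i)] [∀ i, Module.Free S (F i)] [∀ i, Module.Finite S (F i)]
    {M : Type*} [AddCommGroup M] [Module S M]
    (d : ∀ i, F (i + 1) →ₗ[S] F i) (ε : F 0 →ₗ[S] M) (hε : Function.Surjective ε)
    (h₀ : Function.Exact (d 0) ε) (hd : ∀ i, Function.Exact (d (i + 1)) (d i))
    (n : ℕ) [Subsingleton (F (n + 1))] :
    Module.Free S M ∧
      (finrank S M : ℤ) = ∑ i ∈ Finset.range (n + 1), (-1 : ℤ) ^ i * finrank S (F i) := by
  obtain ⟨hfree, hrank⟩ := free_range_and_finrank_of_exact d hd n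
  have hexact : Function.Exact (LinearMap.range (d 0)).subtype ε := by
    rw [LinearMap.exact_iff, Submodule.range_subtype, h₀.linearMap_ker_eq]
  have hinj := (LinearMap.range (d 0)).injective_subtype
  have : Module.Finite S M := Module.Finite.of_surjective ε hε
  have : Module.Free S M := Module.free_of_exact_of_injective hinj hε hexact
  refine ⟨this, ?_⟩
  have := Module.finrank_eq_add_of_exact hinj hε hexact
  rw [Finset.sum_range_succ']
  simp only [pow_succ, mul_neg_one, neg_mul, Finset.sum_neg_distrib, pow_zero, one_mul, ← hrank]
  omega

end Resolution

theorem finrank_localization_eq_alternating_sum {R : Type*} [CommRing R] (p : Ideal R)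
    [p.IsPrime] (hp : p ∈ minimalPrimes R) {F : ℕ → Type*} [∀ i, AddCommGroup (F i)]
    [∀ i, Module R (F i)] [∀ i, Module.Free R (F i)] [∀ i, Module.Finite R (F i)]
    {M : Type*} [AddCommGroup M] [Module R M]
    (d : ∀ i, F (i + 1) →ₗ[R] F i) (ε : F 0 →ₗ[R] M) (hε : Function.Surjective ε)
    (h₀ : Function.Exact (d 0) ε) (hd : ∀ i, Function.Exact (d (i + 1)) (d i))
    (n : ℕ) [Subsingleton (F (n + 1))] :
    (finrank (Localization.AtPrime p) (Localization.AtPrime p ⊗[R] M) : ℤ) =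
      ∑ i ∈ Finset.range (n + 1), (-1 : ℤ) ^ i * finrank R (F i) := by
  have := Ring.KrullDimLE.of_isLocalization p hp (Localization.AtPrime p)
  have := (algebraMap R (Localization.AtPrime p)).domain_nontrivial
  have := (free_and_finrank_of_finite_free_resolution
    (F := fun i => Localization.AtPrime p ⊗[R] F i)
    (fun i => (d i).baseChange _) (ε.baseChange _) (LinearMap.lTensor_surjective _ hε)
    (Module.Flat.lTensor_exact _ h₀) (fun i => Module.Flat.lTensor_exact _ (hd i)) n).2
  simpa only [Module.finrank_baseChange] using this

theorem alternating_sum_of_ranks_well_defined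
    (R : Type*) [CommRing R] [IsLocalRing R]
    (M : Type*) [AddCommGroup M] [Module R M]
    (n : ℕ) (c : ℕ → ℕ)
    (d : (i : ℕ) → ((Fin (c (i + 1)) → R) →ₗ[R] (Fin (c i) → R)))
    (ε : (Fin (c 0) → R) →ₗ[R] M)
    (hε : Function.Surjective ε) (h₀ : Function.Exact (d 0) ε)
    (hd : ∀ i : ℕ, Function.Exact (d (i + 1)) (d i))
    (hc : ∀ i : ℕ, n < i → c i = 0)
    (m : ℕ) (c' : ℕ → ℕ)
    (d' : (i : ℕ) → ((Fin (c' (i + 1)) → R) →ₗ[R] (Fin (c' i) → R)))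
    (ε' : (Fin (c' 0) → R) →ₗ[R] M)
    (hε' : Function.Surjective ε') (h₀' : Function.Exact (d' 0) ε')
    (hd' : ∀ i : ℕ, Function.Exact (d' (i + 1)) (d' i))
    (hc' : ∀ i : ℕ, m < i → c' i = 0) :
    -- the alternating sum of the ranks is independent of the chosen resolution …
    (∑ i ∈ Finset.range (n + 1), (-1 : ℤ) ^ i * (c i : ℤ)) =
      (∑ i ∈ Finset.range (m + 1), (-1 : ℤ) ^ i * (c' i : ℤ)) ∧
    -- … and is nonnegative whenever `M ≠ 0`
    (Nontrivial M → 0 ≤ ∑ i ∈ Finset.range (n + 1), (-1 : ℤ) ^ i * (c i : ℤ)) := by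
  obtain ⟨p, hp⟩ := Ideal.nonempty_minimalPrimes (I := (⊥ : Ideal R)) bot_ne_top
  have : p.IsPrime := hp.1.1
  have hrank : ∀ (n : ℕ) (c : ℕ → ℕ) (d : ∀ i, (Fin (c (i + 1)) → R) →ₗ[R] (Fin (c i) → R))
      (ε : (Fin (c 0) → R) →ₗ[R] M), Function.Surjective ε → Function.Exact (d 0) ε →
      (∀ i, Function.Exact (d (i + 1)) (d i)) → c (n + 1) = 0 →
      (finrank (Localization.AtPrime p) (Localization.AtPrime p ⊗[R] M) : ℤ) =
        ∑ i ∈ Finset.range (n + 1), (-1 : ℤ) ^ i * (c i : ℤ) := by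
    intro n c d ε hε h₀ hd hc
    have : Subsingleton (Fin (c (n + 1)) → R) := by rw [hc]; infer_instance
    simpa using
      finrank_localization_eq_alternating_sum (F := fun i => Fin (c i) → R) p hp d ε hε h₀ hd n
  rw [← hrank n c d ε hε h₀ hd (hc _ n.lt_succ_self),
    ← hrank m c' d' ε' hε' h₀' hd' (hc' _ m.lt_succ_self)]
  exact ⟨rfl, fun _ => Int.natCast_nonneg _⟩
end

section
/- Let (R, m) be a local ring and M a finitely generated R-module admitting a finite free resolution. If the maximal ideal m is a weak associated prime of R (i.e. there exists a ∈ R whose annihilator has radical m; e.g. R has depth 0 in the polynomial-depth sense), then M is free. Consequently, for a scheme X and a sheaf G of finite homological dimension, the stalk G_x is free of rank equal to rank(G) at every weak associated point x of X. -/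
/-!
If `𝔪` is the radical of the annihilator of some `a ≠ 0`, then every finitely generated ideal
inside `𝔪` kills a nonzero element (some multiple of `a`). So if an injective map of finite free
modules `f : F → G` sent some `v ∉ 𝔪F` into `𝔪G`, a common annihilator `b ≠ 0` of the coordinates
of `f v` would give `f (b • v) = 0` with `b • v ≠ 0`. Hence `f` stays injective modulo `𝔪`, and its
cokernel is free. Going down the resolution from the top, every image of a differential, and
finally `M`, is free; the split short exact sequences make ranks additive, and the alternating
sum telescopes to `rank M`.
-/

open IsLocalRing Module

section

variable {R : Type*} [CommRing R]

def Ideal.IsWeaklyAssociated (p : Ideal R) : Prop :=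
  ∃ a : R, ((Ideal.span {a} : Submodule R R).annihilator).radical = p

theorem Submodule.exists_mem_ne_zero_forall_smul_eq_zero_of_le_radical_annihilator
    {M : Type*} [AddCommGroup M] [Module R M] {N : Submodule R M} (hN : N ≠ ⊥)
    {I : Ideal R} (hI : I.FG) (hIN : I ≤ N.annihilator.radical) :
    ∃ x ∈ N, x ≠ 0 ∧ ∀ r ∈ I, r • x = 0 := by
  obtain ⟨k, hk⟩ := Ideal.exists_pow_le_of_le_radical_of_fg hIN hI
  induction k with
  | zero =>
    rw [pow_zero, Ideal.one_eq_top, top_le_iff, annihilator_eq_top_iff] at hk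
    exact absurd hk hN
  | succ k ih =>
    by_cases hk' : I ^ k ≤ N.annihilator
    · exact ih hk'
    obtain ⟨s, hs, hsN⟩ := SetLike.not_le_iff_exists.mp hk'
    obtain ⟨y, hy, hsy⟩ : ∃ y ∈ N, s • y ≠ 0 := by
      simpa [mem_annihilator] using hsN
    refine ⟨s • y, N.smul_mem s hy, hsy, fun r hr => ?_⟩
    rw [smul_smul]
    exact mem_annihilator.mp (hk (pow_succ' I k ▸ Ideal.mul_mem_mul hr hs)) y hy

theorem Module.Basis.mem_ideal_smul_top_iff {M ι : Type*} [AddCommGroup M] [Module R M]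
    (b : Basis ι R M) (I : Ideal R) (x : M) :
    x ∈ I • (⊤ : Submodule R M) ↔ ∀ i, b.repr x i ∈ I := by
  rw [← b.span_eq, Submodule.mem_ideal_smul_span_iff_exists_sum]
  constructor
  · rintro ⟨c, hc, rfl⟩ i
    rw [← Finsupp.linearCombination_apply, b.repr_linearCombination]
    exact hc i
  · intro hx
    exact ⟨b.repr x, hx, b.linearCombination_repr x⟩

theorem LinearMap.lTensor_quotient_injective {M N : Type*} [AddCommGroup M] [Module R M]
    [AddCommGroup N] [Module R N] (I : Ideal R) (f : M →ₗ[R] N)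
    (hf : ∀ v, f v ∈ I • (⊤ : Submodule R N) → v ∈ I • (⊤ : Submodule R M)) :
    Function.Injective (f.lTensor (R ⧸ I)) := by
  refine (injective_iff_map_eq_zero _).mpr fun x hx => ?_
  obtain ⟨v, rfl⟩ := TensorProduct.mk_surjective R M (R ⧸ I) Ideal.Quotient.mk_surjective x
  have hfv : f v ∈ I • (⊤ : Submodule R N) := by
    replace hx : (1 : R ⧸ I) ⊗ₜ[R] f v = 0 := by simpa using hx
    rw [← Submodule.Quotient.mk_eq_zero, ← TensorProduct.quotTensorEquivQuotSMul_mk_one_tmul, hx,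
      map_zero]
  rw [TensorProduct.mk_apply, ← TensorProduct.quotTensorEquivQuotSMul_symm_mk,
    (Submodule.Quotient.mk_eq_zero _).mpr (hf v hfv), map_zero]

theorem Finset.sum_range_neg_one_pow_mul_add {α : Type*} [CommRing α] (r : ℕ → α) (N : ℕ) :
    ∑ i ∈ range N, (-1) ^ i * (r i + r (i + 1)) = r 0 - (-1) ^ N * r N := by
  induction N with
  | zero => simp
  | succ N ih => rw [sum_range_succ, ih, pow_succ]; ring

section WeaklyAssociatedMaximalIdeal

variable [IsLocalRing R] {M N P : Type*} [AddCommGroup M] [Module R M] [AddCommGroup N]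
  [Module R N] [AddCommGroup P] [Module R P]

theorem exists_ne_zero_forall_mul_eq_zero_of_mem_maximalIdeal
    (hm : (maximalIdeal R).IsWeaklyAssociated) {ι : Type*} [Finite ι] (v : ι → R)
    (hv : ∀ i, v i ∈ maximalIdeal R) :
    ∃ b : R, b ≠ 0 ∧ ∀ i, v i * b = 0 := by
  obtain ⟨a, ha⟩ := hm
  have hspan : Ideal.span {a} ≠ ⊥ := fun h => by
    rw [h, Submodule.annihilator_bot, Ideal.radical_top] at ha
    exact (maximalIdeal.isMaximal R).ne_top ha.symm
  obtain ⟨b, -, hb0, hb⟩ :=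
    Submodule.exists_mem_ne_zero_forall_smul_eq_zero_of_le_radical_annihilator hspan
      (Submodule.fg_span (Set.finite_range v))
      (by rw [ha, Ideal.span_le]; rintro _ ⟨i, rfl⟩; exact hv i)
  exact ⟨b, hb0, fun i => hb _ (Ideal.subset_span ⟨i, rfl⟩)⟩

theorem mem_maximalIdeal_smul_top_of_injective (hm : (maximalIdeal R).IsWeaklyAssociated)
    [Free R M] [Free R N] [Module.Finite R N] (f : M →ₗ[R] N) (hf : Function.Injective f)
    (v : M) (hv : f v ∈ maximalIdeal R • (⊤ : Submodule R N)) :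
    v ∈ maximalIdeal R • (⊤ : Submodule R M) := by
  let bM := Free.chooseBasis R M
  let bN := Free.chooseBasis R N
  rw [bN.mem_ideal_smul_top_iff] at hv
  obtain ⟨b, hb0, hb⟩ := exists_ne_zero_forall_mul_eq_zero_of_mem_maximalIdeal hm _ hv
  have hbv : b • v = 0 := hf <| by
    rw [map_smul, map_zero]
    exact bN.ext_elem fun j => by simp [mul_comm b, hb j]
  rw [bM.mem_ideal_smul_top_iff]
  intro i
  by_contra hi
  have : b * bM.repr v i = 0 := by simpa using congrArg (fun w => bM.repr w i) hbv
  exact hb0 ((notMem_maximalIdeal.mp hi).mul_left_eq_zero.mp this)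

theorem free_and_finrank_eq_of_exact (hm : (maximalIdeal R).IsWeaklyAssociated)
    [Free R N] [Module.Finite R N] (f : M →ₗ[R] N) (g : N →ₗ[R] P)
    [Free R (LinearMap.range f)] [Module.Finite R (LinearMap.range f)]
    (h : Function.Exact f g) (hg : Function.Surjective g) :
    Free R P ∧ finrank R N = finrank R (LinearMap.range f) + finrank R P := by
  let incl := (LinearMap.range f).subtype
  have hincl : Function.Injective incl := Subtype.val_injective
  have hexact : Function.Exact incl g :=
    LinearMap.exact_iff.mpr (by rw [Submodule.range_subtype, h.linearMap_ker_eq])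
  have hP : Free R P := Module.free_of_lTensor_residueField_injective incl g hg hexact
    (incl.lTensor_quotient_injective _ (mem_maximalIdeal_smul_top_of_injective hm incl hincl))
  have : Module.Finite R P := .of_surjective g hg
  obtain ⟨l, hl⟩ := Module.projective_lifting_property g LinearMap.id hg
  obtain ⟨e, -⟩ := hexact.splitSurjectiveEquiv hincl ⟨l, hl⟩
  exact ⟨hP, by rw [e.finrank_eq, Module.finrank_prod]⟩

theorem free_range_and_finrank_eq_of_exact (hm : (maximalIdeal R).IsWeaklyAssociated)
    [Free R N] [Module.Finite R N] (f : M →ₗ[R] N) (g : N →ₗ[R] P)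
    [Free R (LinearMap.range f)] [Module.Finite R (LinearMap.range f)]
    (h : Function.Exact f g) :
    Free R (LinearMap.range g) ∧
      finrank R N = finrank R (LinearMap.range f) + finrank R (LinearMap.range g) :=
  free_and_finrank_eq_of_exact hm f g.rangeRestrict
    (LinearMap.exact_iff.mpr (by rw [LinearMap.ker_rangeRestrict, h.linearMap_ker_eq]))
    g.surjective_rangeRestrict

variable {F : ℕ → Type*} [∀ i, AddCommGroup (F i)] [∀ i, Module R (F i)] [∀ i, Free R (F i)]
  [∀ i, Module.Finite R (F i)] {n : ℕ}

theorem free_range_of_exact (hm : (maximalIdeal R).IsWeaklyAssociated)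
    (d : ∀ i, F (i + 1) →ₗ[R] F i) (hd : ∀ i, Function.Exact (d (i + 1)) (d i))
    (hF : ∀ i, n < i → Subsingleton (F i)) (i : ℕ) :
    Free R (LinearMap.range (d i)) := by
  suffices ∀ k i, n ≤ i + k → Free R (LinearMap.range (d i)) from this n i (by omega)
  intro k
  induction k with
  | zero =>
    intro i hi
    have := hF (i + 1) (by omega)
    rw [LinearMap.range_eq_bot.mpr (Subsingleton.elim _ _)]
    infer_instance
  | succ k ih =>
    intro i hi
    have := ih (i + 1) (by omega)
    exact (free_range_and_finrank_eq_of_exact hm _ _ (hd i)).1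

theorem free_and_finrank_eq_sum_of_exact (hm : (maximalIdeal R).IsWeaklyAssociated)
    (d : ∀ i, F (i + 1) →ₗ[R] F i) (ε : F 0 →ₗ[R] M) (hε : Function.Surjective ε)
    (h₀ : Function.Exact (d 0) ε) (hd : ∀ i, Function.Exact (d (i + 1)) (d i))
    (hF : ∀ i, n < i → Subsingleton (F i)) :
    Free R M ∧
      (finrank R M : ℤ) = ∑ i ∈ Finset.range (n + 1), (-1) ^ i * (finrank R (F i) : ℤ) := by
  have := free_range_of_exact hm d hd hF
  obtain ⟨hM, hF₀⟩ := free_and_finrank_eq_of_exact hm (d 0) ε h₀ hε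
  refine ⟨hM, ?_⟩
  let r : ℕ → ℤ
    | 0 => finrank R M
    | i + 1 => finrank R (LinearMap.range (d i))
  have hr : ∀ i, (finrank R (F i) : ℤ) = r i + r (i + 1)
    | 0 => by simp [r, hF₀, add_comm]
    | i + 1 => by simp [r, (free_range_and_finrank_eq_of_exact hm _ _ (hd i)).2]; ring
  have hrn : r (n + 1) = 0 := by
    have := hF (n + 1) (by omega)
    simpa [r] using (d n).finrank_range_le.trans_eq finrank_zero_of_subsingleton
  simp_rw [hr, Finset.sum_range_neg_one_pow_mul_add, hrn, mul_zero, sub_zero, r]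

end WeaklyAssociatedMaximalIdeal

end

theorem free_at_weak_associated_point
    (R : Type*) [CommRing R] [IsLocalRing R]
    (M : Type*) [AddCommGroup M] [Module R M]
    (n : ℕ) (c : ℕ → ℕ)
    (d : (i : ℕ) → ((Fin (c (i + 1)) → R) →ₗ[R] (Fin (c i) → R)))
    (ε : (Fin (c 0) → R) →ₗ[R] M)
    (hε : Function.Surjective ε) (h₀ : Function.Exact (d 0) ε)
    (hd : ∀ i : ℕ, Function.Exact (d (i + 1)) (d i))
    (hc : ∀ i : ℕ, n < i → c i = 0)
    -- `m ∈ WeakAss(R)`: some element of `R` has annihilator with radical the maximal ideal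
    (hweak : ∃ a : R,
      ((Ideal.span {a} : Submodule R R).annihilator).radical = IsLocalRing.maximalIdeal R) :
    Module.Free R M ∧
      (Module.finrank R M : ℤ) =
        ∑ i ∈ Finset.range (n + 1), (-1 : ℤ) ^ i * (c i : ℤ) := by
  have hF : ∀ i, n < i → Subsingleton (Fin (c i) → R) := fun i hi => by
    rw [hc i hi]; infer_instance
  simpa using free_and_finrank_eq_sum_of_exact (F := fun i => Fin (c i) → R) hweak d ε hε h₀ hd hF
end
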